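/- Let d ≥ 1, 1 < q < 2 and C ≥ 0. There exists a constant c = c(q) such that every measurable vector field b : ℝ × ℝ^d → ℝ^d satisfying b(t,x) = 0 for t ≤ 0 and |b(t,x)| ≤ C t^{−1/2} for a.e. (t,x) with t > 0 belongs to the parabolic Morrey class E_q with ‖b‖_{E_q} ≤ c C. -/

import Mathlib

open MeasureTheory Metric Set ENNReal
open scoped Real ENNReal

noncomputable section

abbrev ESp (d : ℕ) := EuclideanSpace ℝ (Fin d)

/-- The parabolic cylinder `C_r(t,x)`. -/
def pCyl (d : ℕ) (r : ℝ) (z : ℝ × ESp d) : Set (ℝ × ESp d) :=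
  {w | z.1 ≤ w.1 ∧ w.1 ≤ z.1 + r ^ 2 ∧ dist w.2 z.2 ≤ r}

/-- The parabolic Morrey norm `‖·‖_{E_q}` of a nonnegative function on `ℝ^{d+1}`. -/
def morreyE (d : ℕ) (q : ℝ) (F : ℝ × ESp d → ℝ≥0∞) : ℝ≥0∞ :=
  ⨆ (r : ℝ) (_ : 0 < r) (z : ℝ × ESp d),
    ENNReal.ofReal r * ((volume (pCyl d r z))⁻¹ * ∫⁻ w in pCyl d r z, F w ^ q) ^ (1 / q)


open scoped NNReal

lemma measurable_rpow_const' (p : ℝ) : Measurable fun x : ℝ => x ^ p := by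
  have h : (fun x : ℝ => x ^ p) = fun x => if x = 0 then (if p = 0 then 1 else 0)
      else if 0 < x then Real.exp (Real.log x * p)
      else Real.exp (Real.log x * p) * Real.cos (p * π) := by
    ext x
    rcases lt_trichotomy x 0 with h|h|h
    · rw [if_neg h.ne, if_neg (not_lt.2 h.le), Real.rpow_def_of_neg h, mul_comm p π]
    · subst h
      rcases eq_or_ne p 0 with hp|hp <;> simp [hp, Real.zero_rpow]
    · rw [if_neg h.ne', if_pos h, Real.rpow_def_of_pos h]
  rw [h]
  refine Measurable.ite (MeasurableSet.congr (measurableSet_singleton 0) (by ext x; simp))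
    measurable_const (Measurable.ite measurableSet_Ioi
      ((Real.measurable_log.mul_const p).exp)
      (((Real.measurable_log.mul_const p).exp).mul_const _))

lemma real_add_rpow_le {x y e : ℝ} (hx : 0 ≤ x) (hy : 0 ≤ y) (he0 : 0 ≤ e) (he1 : e ≤ 1) :
    (x + y) ^ e ≤ x ^ e + y ^ e := by
  have h := NNReal.rpow_add_le_add_rpow (⟨x, hx⟩ : ℝ≥0) (⟨y, hy⟩ : ℝ≥0) he0 he1
  have h2 := NNReal.coe_le_coe.2 h
  exact h2

lemma pCyl_eq_prod (d : ℕ) (r : ℝ) (z : ℝ × ESp d) :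
    pCyl d r z = Icc z.1 (z.1 + r ^ 2) ×ˢ closedBall z.2 r := by
  ext w
  simp only [pCyl, mem_setOf_eq, Set.mem_prod, mem_Icc, mem_closedBall]
  tauto

lemma volume_pCyl (d : ℕ) (r : ℝ) (z : ℝ × ESp d) :
    volume (pCyl d r z) = ENNReal.ofReal (r ^ 2) * volume (closedBall z.2 r) := by
  rw [pCyl_eq_prod, Measure.volume_eq_prod, Measure.prod_prod, Real.volume_Icc,
    add_sub_cancel_left]

lemma setLIntegral_prod_left {d : ℕ} (f : ℝ → ℝ≥0∞) (hf : Measurable f)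
    {S : Set ℝ} (hS : MeasurableSet S) {B : Set (ESp d)} (hB : MeasurableSet B) :
    ∫⁻ w in S ×ˢ B, f w.1 = (∫⁻ s in S, f s) * volume B := by
  rw [Measure.volume_eq_prod, ← Measure.prod_restrict]
  have h := MeasureTheory.lintegral_prod_mul (μ := (volume : Measure ℝ).restrict S)
    (ν := (volume : Measure (ESp d)).restrict B) (f := f) (g := fun _ => (1:ℝ≥0∞))
    hf.aemeasurable aemeasurable_const
  simpa using h

lemma time_integral_bound {p c0 t L : ℝ} (hp1 : -1 < p) (hp0 : p < 0) (hc0 : 0 ≤ c0)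
    (hL : 0 < L) :
    ∫⁻ s in Icc t (t + L),
        (Ioi (0:ℝ)).indicator (fun s => ENNReal.ofReal (c0 * s ^ p)) s
      ≤ ENNReal.ofReal (c0 * L ^ (p + 1) / (p + 1)) := by
  have hp1' : 0 < p + 1 := by linarith
  set a := max t 0 with ha
  have h0a : 0 ≤ a := le_max_right _ _
  have hta : t ≤ a := le_max_left _ _
  have hsub : Ioi (0:ℝ) ∩ Icc t (t + L) ⊆ Icc a (a + L) := by
    rintro s ⟨hs0, hs1, hs2⟩
    exact ⟨max_le hs1 (le_of_lt hs0), by linarith⟩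
  have step1 : ∫⁻ s in Icc t (t + L),
      (Ioi (0:ℝ)).indicator (fun s => ENNReal.ofReal (c0 * s ^ p)) s
      = ∫⁻ s in Ioi (0:ℝ) ∩ Icc t (t + L), ENNReal.ofReal (c0 * s ^ p) := by
    rw [lintegral_indicator measurableSet_Ioi, Measure.restrict_restrict measurableSet_Ioi]
  rw [step1]
  have step2 : ∫⁻ s in Ioi (0:ℝ) ∩ Icc t (t + L), ENNReal.ofReal (c0 * s ^ p)
      ≤ ∫⁻ s in Icc a (a + L), ENNReal.ofReal (c0 * s ^ p) :=
    lintegral_mono_set hsub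
  refine step2.trans ?_
  -- integrability of s ^ p on Icc a (a+L)
  have hii : IntervalIntegrable (fun s : ℝ => s ^ p) volume a (a + L) :=
    intervalIntegral.intervalIntegrable_rpow' hp1
  have hint : IntegrableOn (fun s : ℝ => c0 * s ^ p) (Icc a (a + L)) volume := by
    rw [integrableOn_Icc_iff_integrableOn_Ioc]
    exact ((intervalIntegrable_iff_integrableOn_Ioc_of_le (by linarith)).1 hii).const_mul c0
  have hnn : 0 ≤ᵐ[volume.restrict (Icc a (a + L))] fun s : ℝ => c0 * s ^ p := by
    filter_upwards [ae_restrict_mem measurableSet_Icc] with s hs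
    exact mul_nonneg hc0 (Real.rpow_nonneg (le_trans h0a hs.1) p)
  have step3 : ∫⁻ s in Icc a (a + L), ENNReal.ofReal (c0 * s ^ p)
      = ENNReal.ofReal (∫ s in Icc a (a + L), c0 * s ^ p) :=
    (ofReal_integral_eq_lintegral_ofReal hint hnn).symm
  rw [step3]
  apply ENNReal.ofReal_le_ofReal
  have hval : ∫ s in Icc a (a + L), c0 * s ^ p
      = c0 * (((a + L) ^ (p + 1) - a ^ (p + 1)) / (p + 1)) := by
    rw [MeasureTheory.integral_Icc_eq_integral_Ioc,
      ← intervalIntegral.integral_of_le (by linarith : a ≤ a + L),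
      intervalIntegral.integral_const_mul, integral_rpow (Or.inl hp1)]
  rw [hval]
  have hkey : (a + L) ^ (p + 1) - a ^ (p + 1) ≤ L ^ (p + 1) := by
    have := real_add_rpow_le h0a hL.le hp1'.le (by linarith : p + 1 ≤ 1)
    linarith
  rw [mul_div_assoc]
  apply mul_le_mul_of_nonneg_left _ hc0
  exact (div_le_div_iff_of_pos_right hp1').2 hkey

lemma key_lintegral_bound {q : ℝ} (hq1 : 1 < q) (hq2 : q < 2) {d : ℕ} {C : ℝ} (hC : 0 ≤ C)
    {b : ℝ × ESp d → ESp d} (hb0 : ∀ z : ℝ × ESp d, z.1 ≤ 0 → b z = 0)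
    (hbae : ∀ᵐ z : ℝ × ESp d, 0 < z.1 → ‖b z‖ ≤ C * z.1 ^ (-(1:ℝ)/2))
    {r : ℝ} (hr : 0 < r) (z : ℝ × ESp d) :
    ∫⁻ w in pCyl d r z, ((‖b w‖₊ : ℝ≥0∞)) ^ q
      ≤ ENNReal.ofReal (C ^ q * (r ^ 2) ^ (-(1:ℝ)/2 * q + 1) / (-(1:ℝ)/2 * q + 1))
        * volume (closedBall z.2 r) := by
  set p : ℝ := -(1:ℝ)/2 * q with hp
  set G : ℝ → ℝ≥0∞ := (Ioi (0:ℝ)).indicator (fun s => ENNReal.ofReal (C ^ q * s ^ p))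
    with hG
  have hGmeas : Measurable G :=
    (ENNReal.measurable_ofReal.comp ((measurable_rpow_const' p).const_mul (C ^ q))).indicator
      measurableSet_Ioi
  have hae : ∀ᵐ w : ℝ × ESp d, ((‖b w‖₊ : ℝ≥0∞)) ^ q ≤ G w.1 := by
    filter_upwards [hbae] with w hw
    rcases le_or_gt w.1 0 with h | h
    · rw [hb0 w h]
      simp [ENNReal.zero_rpow_of_pos (by linarith : (0:ℝ) < q)]
    · have hbw := hw h
      have h1 : (‖b w‖₊ : ℝ≥0∞) = ENNReal.ofReal ‖b w‖ := (ofReal_norm _).symm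
      rw [h1, ENNReal.ofReal_rpow_of_nonneg (norm_nonneg _) (by linarith : (0:ℝ) ≤ q)]
      have hmem : G w.1 = ENNReal.ofReal (C ^ q * w.1 ^ p) :=
        Set.indicator_of_mem (show w.1 ∈ Ioi (0:ℝ) from h) _
      rw [hmem]
      apply ENNReal.ofReal_le_ofReal
      calc ‖b w‖ ^ q ≤ (C * w.1 ^ (-(1:ℝ)/2)) ^ q :=
            Real.rpow_le_rpow (norm_nonneg _) hbw (by linarith)
        _ = C ^ q * w.1 ^ p := by
            rw [Real.mul_rpow hC (Real.rpow_nonneg h.le _), ← Real.rpow_mul h.le]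
  calc ∫⁻ w in pCyl d r z, ((‖b w‖₊ : ℝ≥0∞)) ^ q ≤ ∫⁻ w in pCyl d r z, G w.1 :=
        lintegral_mono_ae (ae_restrict_of_ae hae)
    _ = (∫⁻ s in Icc z.1 (z.1 + r ^ 2), G s) * volume (closedBall z.2 r) := by
        rw [pCyl_eq_prod]
        exact setLIntegral_prod_left G hGmeas measurableSet_Icc measurableSet_closedBall
    _ ≤ _ := by
        apply mul_le_mul_left
        exact time_integral_bound (by rw [hp]; linarith) (by rw [hp]; nlinarith)
          (Real.rpow_nonneg hC q) (pow_pos hr 2)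

lemma ennreal_ratio {K R : ℝ} (hR : 0 < R) (hK : 0 ≤ K) {V : ℝ≥0∞} (hV0 : V ≠ 0)
    (hVt : V ≠ ∞) :
    (ENNReal.ofReal R * V)⁻¹ * (ENNReal.ofReal K * V) = ENNReal.ofReal (K / R) := by
  have hR0 : ENNReal.ofReal R ≠ 0 := by simp [hR]
  have hRt : ENNReal.ofReal R ≠ ∞ := ENNReal.ofReal_ne_top
  calc (ENNReal.ofReal R * V)⁻¹ * (ENNReal.ofReal K * V)
      = ((ENNReal.ofReal R)⁻¹ * ENNReal.ofReal K) * (V⁻¹ * V) := by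
        rw [ENNReal.mul_inv (Or.inl hR0) (Or.inl hRt)]; ring
    _ = (ENNReal.ofReal R)⁻¹ * ENNReal.ofReal K := by
        rw [ENNReal.inv_mul_cancel hV0 hVt, mul_one]
    _ = ENNReal.ofReal (K / R) := by
        rw [← ENNReal.ofReal_inv_of_pos hR, ← ENNReal.ofReal_mul (by positivity)]
        rw [inv_mul_eq_div]

lemma real_const_eval {q : ℝ} (hq1 : 1 < q) (hq2 : q < 2) {C r : ℝ} (hC : 0 ≤ C) (hr : 0 < r) :
    r * (C ^ q * (r ^ 2) ^ (-(1:ℝ)/2 * q + 1) / (-(1:ℝ)/2 * q + 1) / r ^ 2) ^ (1/q)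
      = ((-(1:ℝ)/2 * q + 1)⁻¹) ^ (1/q) * C := by
  set p : ℝ := -(1:ℝ)/2 * q with hp
  have hq0 : (0:ℝ) < q := by linarith
  have he : (0:ℝ) < p + 1 := by rw [hp]; linarith
  have hR : (0:ℝ) < r ^ 2 := pow_pos hr 2
  have h1 : C ^ q * (r ^ 2) ^ (p + 1) / (p + 1) / r ^ 2
      = C ^ q * ((r ^ 2) ^ p * (p + 1)⁻¹) := by
    rw [Real.rpow_add_one hR.ne' p]
    field_simp
  have h2 : (C ^ q * ((r ^ 2) ^ p * (p + 1)⁻¹)) ^ (1/q)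
      = C * ((r ^ 2) ^ p) ^ (1/q) * ((p + 1)⁻¹) ^ (1/q) := by
    rw [Real.mul_rpow (Real.rpow_nonneg hC q)
        (mul_nonneg (Real.rpow_nonneg hR.le p) (inv_nonneg.2 he.le)),
      Real.mul_rpow (Real.rpow_nonneg hR.le p) (inv_nonneg.2 he.le),
      ← Real.rpow_mul hC, mul_one_div_cancel hq0.ne', Real.rpow_one, mul_assoc]
  have h3 : ((r ^ 2) ^ p) ^ (1/q) = r⁻¹ := by
    rw [← Real.rpow_natCast r 2, ← Real.rpow_mul hr.le, ← Real.rpow_mul hr.le,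
      show ((2:ℕ):ℝ) * p * (1/q) = -1 by rw [hp]; field_simp; norm_num]
    exact Real.rpow_neg_one r
  rw [show -(1:ℝ)/2 * q + 1 = p + 1 from rfl, h1, h2, h3]
  field_simp


/-- a vector field vanishing for `t ≤ 0` and satisfying `|b(t,x)| ≤ C t^{-1/2}`
for a.e. `(t,x)` with `t > 0` belongs to `E_q` for `1 < q < 2`, with `‖b‖_{E_q} ≤ c C`,
`c = c(q)`. -/
theorem inverse_sqrt_time_subset_morreyE (q : ℝ) (hq1 : 1 < q) (hq2 : q < 2) :
    ∃ c : ℝ, 0 < c ∧ ∀ (d : ℕ), 1 ≤ d → ∀ (C : ℝ), 0 ≤ C →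
      ∀ b : ℝ × ESp d → ESp d, Measurable b →
      (∀ z : ℝ × ESp d, z.1 ≤ 0 → b z = 0) →
      (∀ᵐ z : ℝ × ESp d, 0 < z.1 → ‖b z‖ ≤ C * z.1 ^ (-(1 : ℝ) / 2)) →
      LocallyIntegrable (fun z => ‖b z‖ ^ q) volume ∧
      morreyE d q (fun z => (‖b z‖₊ : ℝ≥0∞)) ≤ ENNReal.ofReal (c * C) := by
  have hq0 : (0:ℝ) < q := by linarith
  have he : (0:ℝ) < -(1:ℝ)/2 * q + 1 := by linarith
  refine ⟨((-(1:ℝ)/2 * q + 1)⁻¹) ^ (1/q),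
    Real.rpow_pos_of_pos (inv_pos.2 he) _, ?_⟩
  intro d hd C hC b hb hb0 hbae
  have hq0' : (0:ℝ) ≤ q := hq0.le
  constructor
  · -- Locally integrable
    have hfmeas : Measurable fun w : ℝ × ESp d => ‖b w‖ ^ q :=
      (Real.continuous_rpow_const hq0').measurable.comp hb.norm
    rw [locallyIntegrable_iff]
    intro k hk
    obtain ⟨M, hM⟩ := hk.isBounded.subset_closedBall (0 : ℝ × ESp d)
    set M' : ℝ := max M 1 with hM'def
    have hM'1 : (1:ℝ) ≤ M' := le_max_right _ _
    have hM'0 : (0:ℝ) < M' := by linarith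
    set r : ℝ := max (Real.sqrt (2 * M')) M' with hrdef
    have hrM : M' ≤ r := le_max_right _ _
    have hr : 0 < r := lt_of_lt_of_le hM'0 hrM
    have hr2 : 2 * M' ≤ r ^ 2 := by
      have h1 : Real.sqrt (2*M') ≤ r := le_max_left _ _
      have h2 := Real.sq_sqrt (by linarith : (0:ℝ) ≤ 2*M')
      nlinarith [Real.sqrt_nonneg (2*M')]
    have hsub : k ⊆ pCyl d r (-M', 0) := by
      intro w hw
      have h2 := hM hw
      rw [mem_closedBall, Prod.dist_eq, Prod.fst_zero, Prod.snd_zero, max_le_iff,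
        Real.dist_eq, sub_zero, dist_zero_right] at h2
      obtain ⟨h2a, h2b⟩ := h2
      have hMM' : M ≤ M' := le_max_left _ _
      have habs := abs_le.1 h2a
      refine ⟨?_, ?_, ?_⟩
      · show (-M', (0:ESp d)).1 ≤ w.1
        dsimp only
        linarith
      · show w.1 ≤ (-M', (0:ESp d)).1 + r ^ 2
        dsimp only
        linarith
      · show dist w.2 (-M', (0:ESp d)).2 ≤ r
        dsimp only
        rw [dist_zero_right]
        linarith
    have hpint : IntegrableOn (fun w => ‖b w‖ ^ q) (pCyl d r (-M', 0)) volume := by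
      refine ⟨hfmeas.aestronglyMeasurable, ?_⟩
      rw [hasFiniteIntegral_iff_norm]
      have heq : ∀ w : ℝ × ESp d, ENNReal.ofReal ‖(‖b w‖ ^ q)‖ = ((‖b w‖₊ : ℝ≥0∞)) ^ q := by
        intro w
        rw [Real.norm_of_nonneg (Real.rpow_nonneg (norm_nonneg _) q),
          ← ENNReal.ofReal_rpow_of_nonneg (norm_nonneg _) hq0', ofReal_norm, enorm_eq_nnnorm]
      calc ∫⁻ w in pCyl d r (-M', 0), ENNReal.ofReal ‖(‖b w‖ ^ q)‖
          = ∫⁻ w in pCyl d r (-M', 0), ((‖b w‖₊ : ℝ≥0∞)) ^ q :=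
            lintegral_congr fun w => heq w
        _ ≤ ENNReal.ofReal (C ^ q * (r ^ 2) ^ (-(1:ℝ)/2 * q + 1) / (-(1:ℝ)/2 * q + 1))
            * volume (closedBall ((-M', (0:ESp d)) : ℝ × ESp d).2 r) :=
            key_lintegral_bound hq1 hq2 hC hb0 hbae hr _
        _ < ∞ := ENNReal.mul_lt_top ENNReal.ofReal_lt_top measure_closedBall_lt_top
    exact hpint.mono_set hsub
  · -- Morrey bound
    refine iSup_le fun r => iSup_le fun hr => iSup_le fun z => ?_
    have hI := key_lintegral_bound hq1 hq2 hC hb0 hbae hr z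
    have hV0 : volume (closedBall z.2 r) ≠ 0 := (measure_closedBall_pos _ _ hr).ne'
    have hVt : volume (closedBall z.2 r) ≠ ∞ := measure_closedBall_lt_top.ne
    set K : ℝ := C ^ q * (r ^ 2) ^ (-(1:ℝ)/2 * q + 1) / (-(1:ℝ)/2 * q + 1) with hKdef
    have hKnn : 0 ≤ K := by
      rw [hKdef]
      have := Real.rpow_nonneg (hC) q
      have := Real.rpow_nonneg (sq_nonneg r : (0:ℝ) ≤ r^2) (-(1:ℝ)/2 * q + 1)
      positivity
    have h1 : (volume (pCyl d r z))⁻¹ * ∫⁻ w in pCyl d r z, ((‖b w‖₊ : ℝ≥0∞)) ^ q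
        ≤ ENNReal.ofReal (K / r ^ 2) := by
      rw [volume_pCyl]
      calc (ENNReal.ofReal (r^2) * volume (closedBall z.2 r))⁻¹
            * ∫⁻ w in pCyl d r z, ((‖b w‖₊ : ℝ≥0∞)) ^ q
          ≤ (ENNReal.ofReal (r^2) * volume (closedBall z.2 r))⁻¹
            * (ENNReal.ofReal K * volume (closedBall z.2 r)) := mul_le_mul_right hI _
        _ = ENNReal.ofReal (K / r^2) := ennreal_ratio (pow_pos hr 2) hKnn hV0 hVt
    calc ENNReal.ofReal r
          * ((volume (pCyl d r z))⁻¹ * ∫⁻ w in pCyl d r z, ((‖b w‖₊ : ℝ≥0∞)) ^ q) ^ (1/q)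
        ≤ ENNReal.ofReal r * (ENNReal.ofReal (K / r^2)) ^ (1/q) :=
          mul_le_mul_right (ENNReal.rpow_le_rpow h1 (by positivity)) _
      _ = ENNReal.ofReal (r * (K / r^2) ^ (1/q)) := by
          rw [ENNReal.ofReal_rpow_of_nonneg (by positivity) (by positivity),
            ← ENNReal.ofReal_mul hr.le]
      _ = ENNReal.ofReal (((-(1:ℝ)/2 * q + 1)⁻¹) ^ (1/q) * C) := by
          rw [hKdef]
          exact congrArg ENNReal.ofReal (real_const_eval hq1 hq2 hC hr)
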